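/- arXiv:2006.06554 — 8 statements merged into one kernel-verified Lean document; each statement's English description precedes it below -/
import Mathlib

section
/- In an exponential vector space X, if x = αy + p for some nonzero scalar α, some p ∈ X₀, and y ∈ X\X₀, then x ∈ X\X₀ and L(x) = L(y). -/
/-- An exponential vector space (evs) over a field `K`. -/
class EVS (K : Type*) [Field K] (X : Type*) extends PartialOrder X, AddCommMonoid X, SMul K X where
  add_le_add_right' : ∀ {x y : X}, x ≤ y → ∀ z : X, x + z ≤ y + z
  smul_le_smul' : ∀ {x y : X}, x ≤ y → ∀ α : K, α • x ≤ α • y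
  smul_add' : ∀ (α : K) (x y : X), α • (x + y) = α • x + α • y
  mul_smul' : ∀ (α β : K) (x : X), α • (β • x) = (α * β) • x
  add_smul_le' : ∀ (α β : K) (x : X), (α + β) • x ≤ α • x + β • x
  one_smul' : ∀ x : X, (1 : K) • x = x
  smul_eq_zero_iff' : ∀ (α : K) (x : X), α • x = 0 ↔ α = 0 ∨ x = 0
  primitive_iff' : ∀ x : X, x + (-1 : K) • x = 0 ↔ (∀ y : X, y ≤ x → y = x)
  exists_primitive' : ∀ x : X, ∃ p : X, (∀ y : X, y ≤ p → y = p) ∧ p ≤ x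

namespace EVS

variable (K : Type*) [Field K]

/-- The primitive space `X₀`: the set of minimal elements of `X`. -/
def primSpace (X : Type*) [EVS K X] : Set X := {x | ∀ y, y ≤ x → y = x}

/-- The testing set `L(x)`. -/
def L {X : Type*} [EVS K X] (x : X) : Set X :=
  {z | ∃ α : K, α ≠ 0 ∧ ∃ p ∈ primSpace K X, α • x + p ≤ z}

/-- `B` is a generator of `X ∖ X₀`. -/
def Generates {X : Type*} [EVS K X] (B : Set X) : Prop :=
  B ⊆ (primSpace K X)ᶜ ∧ (primSpace K X)ᶜ = ⋃ x ∈ B, L K x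

/-- `B` is an orderly independent subset of `X ∖ X₀`. -/
def OrderlyIndep {X : Type*} [EVS K X] (B : Set X) : Prop :=
  B ⊆ (primSpace K X)ᶜ ∧ ∀ x ∈ B, ∀ y ∈ B, x ≠ y → x ∉ L K y ∧ y ∉ L K x

/-- `B` is a basis of `X ∖ X₀`. -/
def IsBasis {X : Type*} [EVS K X] (B : Set X) : Prop :=
  OrderlyIndep K B ∧ Generates K B

/-- The feasible set `Q(X)`. -/
def Q (X : Type*) [EVS K X] : Set X :=
  {x | x ∉ primSpace K X ∧ ∀ y, y ≤ x → y ∉ primSpace K X → y ∈ L K x}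

/-- An order-isomorphism between two evs over a common field `K`. -/
structure IsOrderIso {X Y : Type*} [EVS K X] [EVS K Y] (φ : X → Y) : Prop where
  bijective : Function.Bijective φ
  map_add : ∀ x y : X, φ (x + y) = φ x + φ y
  map_smul : ∀ (α : K) (x : X), φ (α • x) = α • φ x
  le_iff : ∀ x y : X, x ≤ y ↔ φ x ≤ φ y

end EVS


section Aux
variable {K X : Type*} [Field K] [EVS K X]

lemma evs_smul_zero (γ : K) : γ • (0 : X) = 0 :=
  (EVS.smul_eq_zero_iff' γ (0 : X)).2 (Or.inr rfl)

lemma evs_mem_prim_iff (p : X) :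
    p ∈ EVS.primSpace K X ↔ p + (-1 : K) • p = 0 :=
  (EVS.primitive_iff' p).symm

lemma evs_prim_add {p q : X} (hp : p ∈ EVS.primSpace K X)
    (hq : q ∈ EVS.primSpace K X) : p + q ∈ EVS.primSpace K X := by
  rw [evs_mem_prim_iff (K := K)] at hp hq ⊢
  rw [EVS.smul_add']
  calc p + q + ((-1 : K) • p + (-1 : K) • q)
      = (p + (-1 : K) • p) + (q + (-1 : K) • q) := by
        simp only [add_assoc, add_comm, add_left_comm]
    _ = 0 := by rw [hp, hq, add_zero]

lemma evs_prim_smul (γ : K) {p : X} (hp : p ∈ EVS.primSpace K X) :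
    γ • p ∈ EVS.primSpace K X := by
  rw [evs_mem_prim_iff (K := K)] at hp ⊢
  have : γ • p + (-1 : K) • γ • p = γ • (p + (-1 : K) • p) := by
    rw [EVS.smul_add', EVS.mul_smul', EVS.mul_smul', mul_comm]
  rw [this, hp, evs_smul_zero]

lemma evs_prim_cancel (γ : K) {p : X} (hp : p ∈ EVS.primSpace K X) :
    γ • p + (-γ) • p = 0 := by
  rw [evs_mem_prim_iff (K := K)] at hp
  have : γ • p + (-γ) • p = γ • (p + (-1 : K) • p) := by
    rw [EVS.smul_add', EVS.mul_smul']; ring_nf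
  rw [this, hp, evs_smul_zero]

end Aux

/-- if `x = α • y + p` with `α ≠ 0`, `p ∈ X₀`, `y ∈ X ∖ X₀`,
then `x ∈ X ∖ X₀` and `L(x) = L(y)`. -/
theorem stmt_2 {K X : Type*} [Field K] [EVS K X] (x y : X) (α : K) (p : X)
    (hα : α ≠ 0) (hp : p ∈ EVS.primSpace K X) (hy : y ∉ EVS.primSpace K X)
    (hx : x = α • y + p) :
    x ∉ EVS.primSpace K X ∧ EVS.L K x = EVS.L K y := by
  have key : ∀ z : X, z ∈ EVS.L K y → z ∈ EVS.L K x := by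
    intro z hz
    obtain ⟨β, hβ, q, hq, hle⟩ := hz
    refine ⟨β * α⁻¹, by simp [hβ, hα], (-(β * α⁻¹)) • p + q,
      evs_prim_add (evs_prim_smul _ hp) hq, ?_⟩
    have hxx : (β * α⁻¹) • x = β • y + (β * α⁻¹) • p := by
      rw [hx, EVS.smul_add', EVS.mul_smul']
      congr 1
      rw [mul_assoc, inv_mul_cancel₀ hα, mul_one]
    have : (β * α⁻¹) • x + ((-(β * α⁻¹)) • p + q) = β • y + q := by
      rw [hxx]
      rw [add_assoc, ← add_assoc ((β * α⁻¹) • p)]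
      rw [evs_prim_cancel (β * α⁻¹) hp, zero_add]
    rwa [this]
  have key2 : ∀ z : X, z ∈ EVS.L K x → z ∈ EVS.L K y := by
    intro z hz
    obtain ⟨β, hβ, q, hq, hle⟩ := hz
    refine ⟨β * α, mul_ne_zero hβ hα, β • p + q,
      evs_prim_add (evs_prim_smul _ hp) hq, ?_⟩
    have : (β * α) • y + (β • p + q) = β • x + q := by
      rw [hx, EVS.smul_add', EVS.mul_smul', add_assoc]
    rwa [this]
  constructor
  · intro hxprim
    apply hy
    have hyy : y = α⁻¹ • x + (-α⁻¹) • p := by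
      rw [hx, EVS.smul_add', EVS.mul_smul', inv_mul_cancel₀ hα, EVS.one_smul',
        add_assoc, evs_prim_cancel α⁻¹ hp, add_zero]
    rw [hyy]
    exact evs_prim_add (evs_prim_smul _ hxprim) (evs_prim_smul _ hp)
  · ext z
    exact ⟨key2 z, key z⟩
end

section
/- In an exponential vector space X, for every x ∈ X\X₀ the testing set L(x) is disjoint from the primitive space X₀. -/
/-- for `x ∈ X ∖ X₀`, `L(x) ∩ X₀ = ∅`. -/
theorem stmt_3 {K X : Type*} [Field K] [EVS K X] (x : X) (hx : x ∉ EVS.primSpace K X) :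
    EVS.L K x ∩ EVS.primSpace K X = ∅ := by
  ext z
  simp only [Set.mem_inter_iff, Set.mem_empty_iff_false, iff_false, not_and]
  rintro ⟨α, hα, p, hp, hle⟩ hz
  apply hx
  rw [EVS.primSpace, Set.mem_setOf_eq, ← EVS.primitive_iff']
  have heq : α • x + p = z := hz _ hle
  have hz0 : z + (-1 : K) • z = 0 := (EVS.primitive_iff' z).mpr hz
  have hp0 : p + (-1 : K) • p = 0 := (EVS.primitive_iff' p).mpr hp
  rw [← heq, EVS.smul_add', EVS.mul_smul'] at hz0
  have h1 : α • x + (-α) • x = 0 := by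
    have : α • x + p + ((-1 * α) • x + (-1 : K) • p)
        = (α • x + (-1 * α) • x) + (p + (-1 : K) • p) := by
      abel_nf
    rw [this, hp0, add_zero, neg_one_mul] at hz0
    exact hz0
  have h2 : α⁻¹ • (α • x + (-α) • x) = (0 : X) := by
    rw [h1]
    exact (EVS.smul_eq_zero_iff' α⁻¹ (0 : X)).mpr (Or.inr rfl)
  rw [EVS.smul_add', EVS.mul_smul', EVS.mul_smul', inv_mul_cancel₀ hα,
    mul_neg, inv_mul_cancel₀ hα, EVS.one_smul'] at h2
  exact h2
end

section
/- In an exponential vector space X, if a ∈ L(b) for a,b ∈ X\X₀, then L(a) ⊆ L(b). -/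
/-- if `a ∈ L(b)` for `a, b ∈ X ∖ X₀`, then `L(a) ⊆ L(b)`. -/
theorem stmt_4 {K X : Type*} [Field K] [EVS K X] (a b : X)
    (ha : a ∉ EVS.primSpace K X) (hb : b ∉ EVS.primSpace K X) (h : a ∈ EVS.L K b) :
    EVS.L K a ⊆ EVS.L K b := by
  obtain ⟨β, hβ, q, hq, hle⟩ := h
  intro z hz
  obtain ⟨α, hα, p, hp, hle'⟩ := hz
  -- α • q is primitive
  have hzero : ∀ γ : K, γ • (0 : X) = 0 := fun γ =>
    (EVS.smul_eq_zero_iff' γ (0 : X)).mpr (Or.inr rfl)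
  have hq0 : q + (-1 : K) • q = 0 := (EVS.primitive_iff' q).mpr hq
  have hp0 : p + (-1 : K) • p = 0 := (EVS.primitive_iff' p).mpr hp
  have haq : α • q + (-1 : K) • (α • q) = 0 := by
    rw [EVS.mul_smul', show (-1 : K) * α = α * (-1) by ring, ← EVS.mul_smul',
      ← EVS.smul_add', hq0, hzero]
  have hsum : (α • q + p) + (-1 : K) • (α • q + p) = 0 := by
    rw [EVS.smul_add']
    calc (α • q + p) + ((-1 : K) • (α • q) + (-1 : K) • p)
        = (α • q + (-1 : K) • (α • q)) + (p + (-1 : K) • p) := by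
          abel
      _ = 0 := by rw [haq, hp0, add_zero]
  refine ⟨α * β, mul_ne_zero hα hβ, α • q + p, (EVS.primitive_iff' _).mp hsum, ?_⟩
  have h1 : α • (β • b + q) ≤ α • a := EVS.smul_le_smul' hle α
  have h2 : α • (β • b + q) + p ≤ α • a + p := EVS.add_le_add_right' h1 p
  have h3 : α • (β • b + q) + p = (α * β) • b + (α • q + p) := by
    rw [EVS.smul_add', EVS.mul_smul', add_assoc]
  exact le_trans (h3 ▸ h2) hle'
end

section
/- In an exponential vector space X, a subset B of X\X₀ is a basis of X\X₀ (orderly independent and generating) if and only if B is a minimal generating subset of X\X₀, i.e., B generates X\X₀ but no proper subset of B generates X\X₀. -/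
namespace EVS

variable {K X : Type*} [Field K] [EVS K X]

lemma zero_prim' : (0 : X) ∈ primSpace K X := by
  apply (primitive_iff' (0 : X)).mp
  rw [(smul_eq_zero_iff' (-1 : K) (0 : X)).mpr (Or.inr rfl), add_zero]

lemma prim_smul' {p : X} (hp : p ∈ primSpace K X) (α : K) : α • p ∈ primSpace K X := by
  apply (primitive_iff' (α • p)).mp
  have h := (primitive_iff' p).mpr hp
  calc α • p + (-1 : K) • (α • p) = α • p + α • ((-1 : K) • p) := by
        rw [mul_smul', mul_smul', mul_comm]
    _ = α • (p + (-1 : K) • p) := (smul_add' α p _).symm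
    _ = α • (0 : X) := by rw [h]
    _ = 0 := (smul_eq_zero_iff' α 0).mpr (Or.inr rfl)

lemma prim_add' {p q : X} (hp : p ∈ primSpace K X) (hq : q ∈ primSpace K X) :
    p + q ∈ primSpace K X := by
  apply (primitive_iff' (p + q)).mp
  have h1 := (primitive_iff' p).mpr hp
  have h2 := (primitive_iff' q).mpr hq
  rw [smul_add' (-1 : K) p q]
  calc p + q + ((-1 : K) • p + (-1 : K) • q)
      = (p + (-1 : K) • p) + (q + (-1 : K) • q) := by
        rw [add_add_add_comm]
    _ = 0 := by rw [h1, h2, add_zero]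

lemma L_trans' {x y : X} (hy : y ∈ L K x) : L K y ⊆ L K x := by
  rintro z ⟨α, hα, p, hp, hz⟩
  obtain ⟨β, hβ, q, hq, hyx⟩ := hy
  refine ⟨α * β, mul_ne_zero hα hβ, α • q + p, prim_add' (prim_smul' hq α) hp, ?_⟩
  have h1 : (α * β) • x + (α • q + p) = α • (β • x + q) + p := by
    rw [smul_add', mul_smul', add_assoc]
  rw [h1]
  exact le_trans (add_le_add_right' (smul_le_smul' hyx α) p) hz

lemma gen_diff' {B : Set X} (hg : Generates K B) {x y : X} (hy : y ∈ B)
    (hxy : y ≠ x) (hL : x ∈ L K y) : Generates K (B \ {x}) := by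
  refine ⟨fun z hz => hg.1 hz.1, Set.Subset.antisymm ?_ ?_⟩
  · intro z hz
    rw [hg.2] at hz
    simp only [Set.mem_iUnion] at hz ⊢
    obtain ⟨b, hb, hzb⟩ := hz
    by_cases hbx : b = x
    · exact ⟨y, ⟨hy, hxy⟩, L_trans' hL (hbx ▸ hzb)⟩
    · exact ⟨b, ⟨hb, hbx⟩, hzb⟩
  · intro z hz
    simp only [Set.mem_iUnion] at hz
    obtain ⟨b, hb, hzb⟩ := hz
    rw [hg.2]
    simp only [Set.mem_iUnion]
    exact ⟨b, hb.1, hzb⟩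

end EVS

/-- `B` is a basis of `X ∖ X₀` iff `B` is a minimal generating subset of `X ∖ X₀`. -/
theorem stmt_8 {K X : Type*} [Field K] [EVS K X] (B : Set X) :
    EVS.IsBasis K B ↔
      (EVS.Generates K B ∧ ∀ C : Set X, C ⊆ B → C ≠ B → ¬ EVS.Generates K C) := by
  constructor
  · rintro ⟨⟨hBsub, hind⟩, hgen⟩
    refine ⟨hgen, fun C hCB hCne hCgen => ?_⟩
    obtain ⟨b, hbB, hbC⟩ : ∃ b, b ∈ B ∧ b ∉ C := by
      by_contra h
      push_neg at h
      exact hCne (hCB.antisymm fun b hb => h b hb)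
    have hb' : b ∈ (EVS.primSpace K X)ᶜ := hBsub hbB
    rw [hCgen.2] at hb'
    simp only [Set.mem_iUnion] at hb'
    obtain ⟨c, hcC, hbc⟩ := hb'
    have hcB := hCB hcC
    have hne : b ≠ c := fun h => hbC (h ▸ hcC)
    exact (hind b hbB c hcB hne).1 hbc
  · rintro ⟨hgen, hmin⟩
    refine ⟨⟨hgen.1, fun x hx y hy hxy => ?_⟩, hgen⟩
    constructor
    · intro hxLy
      refine hmin (B \ {x}) Set.diff_subset ?_ (EVS.gen_diff' hgen hy hxy.symm hxLy)
      intro heq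
      exact ((heq.symm ▸ hx : x ∈ B \ {x}).2) rfl
    · intro hyLx
      refine hmin (B \ {y}) Set.diff_subset ?_ (EVS.gen_diff' hgen hx hxy hyLx)
      intro heq
      exact ((heq.symm ▸ hy : y ∈ B \ {y}).2) rfl
end

section
/- In an exponential vector space X, every basis of X\X₀ is a maximal orderly independent subset of X\X₀. -/
/-- every basis of `X ∖ X₀` is a maximal orderly independent subset of `X ∖ X₀`. -/
theorem stmt_9 {K X : Type*} [Field K] [EVS K X] (B : Set X) (hB : EVS.IsBasis K B) :
    EVS.OrderlyIndep K B ∧ ∀ C : Set X, EVS.OrderlyIndep K C → B ⊆ C → B = C := by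
  refine ⟨hB.1, fun C hC hBC => ?_⟩
  by_contra hne
  obtain ⟨c, hcC, hcB⟩ : ∃ c, c ∈ C ∧ c ∉ B := by
    by_contra h
    push_neg at h
    exact hne (Set.Subset.antisymm hBC h)
  have hc : c ∈ (EVS.primSpace K X)ᶜ := hC.1 hcC
  rw [hB.2.2] at hc
  simp only [Set.mem_iUnion] at hc
  obtain ⟨x, hxB, hcLx⟩ := hc
  have hxc : x ≠ c := fun h => hcB (h ▸ hxB)
  exact (hC.2 x (hBC hxB) c hcC hxc).2 hcLx
end

section
/- Let A and B be two bases of X\X₀ in an exponential vector space X. Then for each a∈A there exists a unique b∈B with L(a)=L(b). -/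
namespace EVSAux

open EVS

variable {K : Type*} [Field K] {X : Type*} [EVS K X]

lemma smul_zero'' (α : K) : α • (0 : X) = 0 :=
  (EVS.smul_eq_zero_iff' α 0).mpr (Or.inr rfl)

lemma zero_prim : (0 : X) ∈ primSpace K X :=
  (EVS.primitive_iff' (0 : X)).mp (by rw [smul_zero'' (K := K)]; exact add_zero 0)

lemma mem_L_self (x : X) : x ∈ L K x :=
  ⟨1, one_ne_zero, 0, zero_prim, by rw [EVS.one_smul', add_zero]⟩

lemma prim_smul {p : X} (α : K) (hp : p ∈ primSpace K X) :
    α • p ∈ primSpace K X := by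
  apply (EVS.primitive_iff' (α • p)).mp
  have h1 : ((-1 : K)) • (α • p) = α • ((-1 : K) • p) := by
    rw [EVS.mul_smul', EVS.mul_smul', mul_comm]
  rw [h1, ← EVS.smul_add', (EVS.primitive_iff' p).mpr hp, smul_zero'']

lemma prim_add {p q : X} (hp : p ∈ primSpace K X) (hq : q ∈ primSpace K X) :
    p + q ∈ primSpace K X := by
  apply (EVS.primitive_iff' (p + q)).mp
  have hp' := (EVS.primitive_iff' p).mpr hp
  have hq' := (EVS.primitive_iff' q).mpr hq
  rw [EVS.smul_add', show p + q + ((-1 : K) • p + (-1 : K) • q)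
      = (p + (-1 : K) • p) + (q + (-1 : K) • q) by
    rw [add_add_add_comm], hp', hq', add_zero]

lemma L_trans {x y : X} (hyx : y ∈ L K x) : L K y ⊆ L K x := by
  rintro z ⟨β, hβ, q, hq, hzy⟩
  obtain ⟨α, hα, p, hp, hxy⟩ := hyx
  refine ⟨β * α, mul_ne_zero hβ hα, β • p + q, prim_add (prim_smul β hp) hq, ?_⟩
  have h1 : β • (α • x + p) + q ≤ β • y + q :=
    EVS.add_le_add_right' (EVS.smul_le_smul' hxy β) q
  have h2 : (β * α) • x + (β • p + q) = β • (α • x + p) + q := by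
    rw [EVS.smul_add', EVS.mul_smul', add_assoc]
  rw [h2]
  exact le_trans h1 hzy

end EVSAux

/-- for bases `A`, `B` of `X ∖ X₀`, each `a ∈ A` corresponds to a unique
`b ∈ B` with `L(a) = L(b)`. -/
theorem stmt_10 {K X : Type*} [Field K] [EVS K X] (A B : Set X)
    (hA : EVS.IsBasis K A) (hB : EVS.IsBasis K B) :
    ∀ a ∈ A, ∃! b : X, b ∈ B ∧ EVS.L K a = EVS.L K b := by
  classical
  intro a ha
  have haC : a ∈ (EVS.primSpace K X)ᶜ := hA.1.1 ha
  -- find b ∈ B with a ∈ L b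
  have haU : a ∈ ⋃ x ∈ B, EVS.L K x := hB.2.2 ▸ haC
  obtain ⟨b, hb, hab⟩ := Set.mem_iUnion₂.mp haU
  -- b ∈ L a' for some a' ∈ A, forcing a' = a
  have hbC : b ∈ (EVS.primSpace K X)ᶜ := hB.1.1 hb
  have hbU : b ∈ ⋃ x ∈ A, EVS.L K x := hA.2.2 ▸ hbC
  obtain ⟨a', ha', hba'⟩ := Set.mem_iUnion₂.mp hbU
  have haa' : a ∈ EVS.L K a' := EVSAux.L_trans hba' hab
  have heq : a' = a := by
    by_contra hne
    exact (hA.1.2 a ha a' ha' (fun h => hne h.symm)).1 haa'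
  have hba : b ∈ EVS.L K a := heq ▸ hba'
  have hLeq : EVS.L K a = EVS.L K b :=
    Set.Subset.antisymm (EVSAux.L_trans hab) (EVSAux.L_trans hba)
  refine ⟨b, ⟨hb, hLeq⟩, ?_⟩
  rintro b' ⟨hb', hLeq'⟩
  by_contra hne
  have h1 : b' ∈ EVS.L K b := by
    have := EVSAux.mem_L_self (K := K) b'
    rw [← hLeq', hLeq] at this
    exact this
  exact (hB.1.2 b' hb' b hb hne).1 h1
end

section
/- Let X be an exponential vector space and B a basis of X\X₀. Then for each x∈B, (↓x)\X₀ ⊆ L(x), where ↓x = {y∈X : y ≤ x}. In other words, every basis element belongs to the feasible set Q(X) := {x∈X\X₀ : (↓x)\X₀ ⊆ L(x)}. -/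
/-- for a basis `B` of `X ∖ X₀` and `x ∈ B`, `(↓x) ∖ X₀ ⊆ L(x)`;
i.e. every basis element lies in the feasible set `Q(X)`. -/
theorem stmt_12 {K X : Type*} [Field K] [EVS K X] (B : Set X) (hB : EVS.IsBasis K B) :
    ∀ x ∈ B, ({y : X | y ≤ x} \ EVS.primSpace K X ⊆ EVS.L K x) ∧ x ∈ EVS.Q K X := by
  intro x hx
  obtain ⟨⟨hBsub, hindep⟩, ⟨_, hgen⟩⟩ := hB
  have hxp : x ∉ EVS.primSpace K X := hBsub hx
  have key : {y : X | y ≤ x} \ EVS.primSpace K X ⊆ EVS.L K x := by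
    rintro y ⟨hyx, hyp⟩
    have hy : y ∈ (EVS.primSpace K X)ᶜ := hyp
    rw [hgen] at hy
    simp only [Set.mem_iUnion] at hy
    obtain ⟨b, hb, hyb⟩ := hy
    by_cases hbx : b = x
    · rwa [hbx] at hyb
    · exfalso
      obtain ⟨α, hα, p, hp, hle⟩ := hyb
      exact (hindep x hx b hb (Ne.symm hbx)).1 ⟨α, hα, p, hp, le_trans hle hyx⟩
  exact ⟨key, hxp, fun y hy hyp => key ⟨hy, hyp⟩⟩
end

section
/- The exponential vector space X := D([0,∞):ℕ), namely [0,∞)^ℕ with coordinatewise addition, scalar multiplication α·(xᵢ) = (|α|xᵢ), and the lexicographic (dictionary) order, has empty feasible set Q(X) and hence has no basis of X\X₀. -/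
/-! STATEMENT 19: the evs `D([0,∞):ℕ)`, i.e. `[0,∞)^ℕ` with coordinatewise addition,
scalar multiplication `α • x = (|α| * xᵢ)ᵢ` and the lexicographic (dictionary) order,
has empty feasible set `Q(X)` and hence no basis of `X ∖ X₀`.
We realise the carrier as the set of nonnegative real sequences; the primitive
space is `{0}`. -/

namespace Stmt19

/-- The carrier `[0,∞)^ℕ` as a set of real sequences. -/
def carrier : Set (ℕ → ℝ) := {x | ∀ i, 0 ≤ x i}

/-- Scalar multiplication: `α • x = (|α| * xᵢ)ᵢ`. -/
def smul (α : ℝ) (x : ℕ → ℝ) : ℕ → ℝ := fun i => |α| * x i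

/-- Lexicographic (dictionary) order on sequences. -/
def lexLe (x y : ℕ → ℝ) : Prop :=
  x = y ∨ ∃ n : ℕ, (∀ i < n, x i = y i) ∧ x n < y n

/-- The testing set `L(x) = {z ∈ X : z ≥ α • x for some α ≠ 0}`
(the primitive space being `{0}`). -/
def L (x : ℕ → ℝ) : Set (ℕ → ℝ) :=
  {z | z ∈ carrier ∧ ∃ α : ℝ, α ≠ 0 ∧ lexLe (smul α x) z}

/-- The feasible set `Q(X) = {x ∈ X ∖ {0} : (↓x) ∖ {0} ⊆ L(x)}`. -/
def Q : Set (ℕ → ℝ) :=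
  {x | x ∈ carrier ∧ x ≠ 0 ∧ ∀ y, y ∈ carrier → lexLe y x → y ≠ 0 → y ∈ L x}

/-- `B` is a basis of `X ∖ X₀`: orderly independent and generating. -/
def IsBasis (B : Set (ℕ → ℝ)) : Prop :=
  B ⊆ carrier \ {0} ∧
  (∀ x ∈ B, ∀ y ∈ B, x ≠ y → x ∉ L y ∧ y ∉ L x) ∧
  carrier \ {0} = ⋃ x ∈ B, L x

lemma lexLe_trans {a b c : ℕ → ℝ} (h1 : lexLe a b) (h2 : lexLe b c) : lexLe a c := by
  rcases h1 with rfl | ⟨m, hm, hm'⟩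
  · exact h2
  rcases h2 with rfl | ⟨n, hn, hn'⟩
  · exact Or.inr ⟨m, hm, hm'⟩
  rcases lt_trichotomy m n with h | rfl | h
  · exact Or.inr ⟨m, fun i hi => (hm i hi).trans (hn i (hi.trans h)),
      by rw [hn m h] at hm'; exact hm'⟩
  · exact Or.inr ⟨m, fun i hi => (hm i hi).trans (hn i hi), hm'.trans hn'⟩
  · exact Or.inr ⟨n, fun i hi => (hm i (hi.trans h)).trans (hn i hi),
      by rw [hm n h]; exact hn'⟩

lemma Q_empty : Q = ∅ := by
  ext x
  simp only [Set.mem_empty_iff_false, iff_false]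
  rintro ⟨hxc, hx0, hQ⟩
  have hex : ∃ n, x n ≠ 0 := by
    by_contra h; push_neg at h; exact hx0 (funext h)
  set n := Nat.find hex with hndef
  have hn : x n ≠ 0 := Nat.find_spec hex
  have hn' : ∀ i < n, x i = 0 := fun i hi => not_not.mp (Nat.find_min hex hi)
  have hxn : 0 < x n := lt_of_le_of_ne (hxc n) (Ne.symm hn)
  set y : ℕ → ℝ := fun i => if i = n + 1 then 1 else 0 with hy
  have hyc : y ∈ carrier := by
    intro i; simp only [hy]; split <;> norm_num
  have hylex : lexLe y x := Or.inr ⟨n,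
    fun i hi => by simp only [hy]; rw [if_neg (by omega), hn' i hi],
    by simp only [hy]; rw [if_neg (by omega)]; exact hxn⟩
  have hy0 : y ≠ 0 := by
    intro h
    have := congrFun h (n+1)
    simp [hy] at this
  rcases hQ y hyc hylex hy0 with ⟨_, α, hα, hle⟩
  have hαpos : 0 < |α| := abs_pos.mpr hα
  rcases hle with heq | ⟨m, hm, hm'⟩
  · have := congrFun heq n
    simp only [smul, hy, if_neg (by omega : ¬ n = n+1)] at this
    nlinarith
  · have hym : y m = 1 := by
      have h0 : 0 ≤ |α| * x m := mul_nonneg hαpos.le (hxc m)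
      simp only [smul] at hm'
      by_contra h
      have : y m = 0 := by simp only [hy]; rw [if_neg]; intro hh; apply h; simp [hy, hh]
      linarith
    have hmn : m = n + 1 := by
      by_contra h
      have : y m = 0 := by simp [hy, h]
      rw [this] at hym; norm_num at hym
    have := hm n (by omega)
    simp only [smul, hy, if_neg (by omega : ¬ n = n+1)] at this
    nlinarith

theorem stmt_19 : Q = ∅ ∧ ¬ ∃ B : Set (ℕ → ℝ), IsBasis B := by
  refine ⟨Q_empty, ?_⟩
  rintro ⟨B, hBsub, hBind, hBgen⟩
  have h1 : (fun _ => (1:ℝ)) ∈ carrier \ {0} := by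
    constructor
    · intro i; norm_num
    · simp only [Set.mem_singleton_iff]
      intro h; have := congrFun h 0; norm_num at this
  rw [hBgen] at h1
  simp only [Set.mem_iUnion] at h1
  obtain ⟨x, hxB, _⟩ := h1
  have hxQ : x ∈ Q := by
    obtain ⟨hxc, hx0⟩ := hBsub hxB
    refine ⟨hxc, by simpa using hx0, ?_⟩
    intro y hyc hylex hy0
    have hy : y ∈ carrier \ {0} := ⟨hyc, by simpa using hy0⟩
    rw [hBgen] at hy
    simp only [Set.mem_iUnion] at hy
    obtain ⟨x', hx'B, _, α, hα, hle⟩ := hy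
    by_cases hxx : x' = x
    · subst hxx; exact ⟨hyc, α, hα, hle⟩
    · have hxL : x ∈ L x' := ⟨hxc, α, hα, lexLe_trans hle hylex⟩
      exact absurd hxL ((hBind x hxB x' hx'B (fun h => hxx h.symm)).1)
  rw [Q_empty] at hxQ
  exact hxQ

end Stmt19
end
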